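/- arXiv:1606.07648 — 4 statements merged into one kernel-verified Lean document; each statement's English description precedes it below -/
import Mathlib

section
/- Let H = H₁ × ⋯ × Hₛ be a (finite) Cartesian product of nonabelian finite simple groups Hᵢ and let a be an automorphism of H. Suppose that none of the simple factors Hᵢ lies in the fixed-point subgroup C_H(a) = {h ∈ H : a(h) = h}, i.e., for each i there is an element of the i-th factor not fixed by a. Then H = [H,a], where [H,a] is the subgroup generated by all elements h⁻¹·a(h) with h ∈ H. -/
/-!
`[H, a]` is normal, since conjugating `h⁻¹ a(h)` by `g` gives `(hg⁻¹)⁻¹ a(hg⁻¹) · (g a(g⁻¹))⁻¹`.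
A normal subgroup of `H₁ × ⋯ × Hₛ` with nontrivial `j`-th projection contains `Hⱼ`: the
commutator of one of its elements with a suitable element of `Hⱼ` is a nontrivial element of
`Hⱼ`, and `Hⱼ` is simple. If the `j`-th projection of `[H, a]` were trivial, then `a` and `a⁻¹`
would preserve `j`-th coordinates; as `Hⱼ` commutes with everything having trivial `j`-th
coordinate, `a(Hⱼ)` would then commute with every factor `Hᵢ`, `i ≠ j`, and centerlessness
forces `a` to fix `Hⱼ`.
-/

open Subgroup

lemma IsSimpleGroup.center_eq_bot {G : Type*} [Group G] [IsSimpleGroup G]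
    (h : ∃ x y : G, x * y ≠ y * x) : center G = ⊥ :=
  (instNormalCenter (G := G)).eq_bot_or_eq_top.resolve_right fun htop => by
    obtain ⟨x, y, hxy⟩ := h
    exact hxy (mem_center_iff.1 (htop ▸ mem_top x) y).symm

lemma Subgroup.closure_inv_mul_apply_normal {G F : Type*} [Group G] [FunLike F G G]
    [MonoidHomClass F G G] (f : F) : (closure {c : G | ∃ h, c = h⁻¹ * f h}).Normal := by
  set S := {c : G | ∃ h, c = h⁻¹ * f h}
  have hle : normalClosure S ≤ closure S := (closure_le _).2 fun c hc => by
    obtain ⟨_, ⟨h, rfl⟩, hconj⟩ := Group.mem_conjugatesOfSet_iff.1 hc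
    obtain ⟨g, rfl⟩ := isConj_iff.1 hconj
    have hquot : g * (h⁻¹ * f h) * g⁻¹
        = ((h * g⁻¹)⁻¹ * f (h * g⁻¹)) * (g⁻¹⁻¹ * f g⁻¹)⁻¹ := by
      simp only [map_mul, map_inv]
      group
    rw [hquot]
    exact mul_mem (subset_closure ⟨_, rfl⟩) (inv_mem (subset_closure ⟨_, rfl⟩))
  rw [← le_antisymm hle ((closure_le _).2 subset_normalClosure)]
  infer_instance

section Pi

variable {ι : Type*} [DecidableEq ι] {H : ι → Type*} [∀ i, Group (H i)]

lemma Pi.mulSingle_mem_of_apply_ne_one {N : Subgroup (∀ i, H i)} [hN : N.Normal] {j : ι}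
    [IsSimpleGroup (H j)] (hcenter : center (H j) = ⊥) {k : ∀ i, H i} (hk : k ∈ N)
    (hkj : k j ≠ 1) (x : H j) : Pi.mulSingle j x ∈ N := by
  obtain ⟨y, hy⟩ : ∃ y : H j, y * k j ≠ k j * y := by
    by_contra! h
    exact hkj (mem_bot.1 (hcenter ▸ mem_center_iff.2 h))
  have hcomm : k⁻¹ * (Pi.mulSingle j y * k * (Pi.mulSingle j y)⁻¹)
      = Pi.mulSingle j ((k j)⁻¹ * (y * k j * y⁻¹)) := by
    ext i
    by_cases hij : i = j
    · subst hij
      simp [mul_assoc]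
    · simp [Pi.mulSingle_eq_of_ne hij]
  have hmem : (k j)⁻¹ * (y * k j * y⁻¹) ∈ N.comap (MonoidHom.mulSingle H j) := by
    change Pi.mulSingle j _ ∈ N
    rw [← hcomm]
    exact mul_mem (inv_mem hk) (hN.conj_mem k hk _)
  have hne : (k j)⁻¹ * (y * k j * y⁻¹) ≠ 1 := by
    rw [Ne, inv_mul_eq_one, eq_mul_inv_iff_mul_eq]
    exact fun h => hy h.symm
  have htop := (hN.comap (MonoidHom.mulSingle H j)).eq_bot_or_eq_top.resolve_left
    fun hbot => hne (mem_bot.1 (hbot ▸ hmem))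
  exact (htop ▸ mem_top x : x ∈ N.comap (MonoidHom.mulSingle H j))

lemma MulAut.apply_mulSingle_eq_of_apply_eq (hcenter : ∀ i, center (H i) = ⊥)
    (a : MulAut (∀ i, H i)) {j : ι} (haj : ∀ h, a h j = h j) (x : H j) :
    a (Pi.mulSingle j x) = Pi.mulSingle j x := by
  ext i
  by_cases hij : i = j
  · subst hij
    exact haj _
  rw [Pi.mulSingle_eq_of_ne hij]
  have hcomm (y : H i) : Commute (Pi.mulSingle j x) (a.symm (Pi.mulSingle i y)) := by
    have hsymm : a.symm (Pi.mulSingle i y) j = 1 := by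
      simpa [Pi.mulSingle_eq_of_ne (Ne.symm hij)] using (haj (a.symm (Pi.mulSingle i y))).symm
    ext l
    by_cases hlj : l = j
    · subst hlj
      simp [hsymm]
    · simp [Pi.mulSingle_eq_of_ne hlj]
  have hcentral : a (Pi.mulSingle j x) i ∈ center (H i) := mem_center_iff.2 fun y => by
    simpa using (congrFun ((hcomm y).map a).eq i).symm
  exact mem_bot.1 (hcenter i ▸ hcentral)

end Pi

theorem stmt_1_general {ι : Type*} [Fintype ι] [DecidableEq ι] (H : ι → Type*)
    [∀ i, Group (H i)] [∀ i, IsSimpleGroup (H i)]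
    (hna : ∀ i, ∃ x y : H i, x * y ≠ y * x)
    (a : MulAut (∀ i, H i))
    (hfix : ∀ i, ∃ x : H i, a (Pi.mulSingle i x) ≠ Pi.mulSingle i x) :
    Subgroup.closure {c : ∀ i, H i | ∃ h : ∀ i, H i, c = h⁻¹ * a h} = ⊤ := by
  have := closure_inv_mul_apply_normal a
  have hcenter (i : ι) := IsSimpleGroup.center_eq_bot (hna i)
  have hproj (j : ι) : ∃ k ∈ closure {c | ∃ h, c = h⁻¹ * a h}, k j ≠ 1 := by
    by_contra! hK
    obtain ⟨x, hx⟩ := hfix j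
    refine hx (MulAut.apply_mulSingle_eq_of_apply_eq hcenter a (fun h => ?_) x)
    exact (inv_mul_eq_one.1 (hK _ (subset_closure ⟨h, rfl⟩))).symm
  refine (eq_top_iff' _).2 fun x => pi_mem_of_mulSingle_mem x fun j => ?_
  obtain ⟨k, hk, hkj⟩ := hproj j
  exact Pi.mulSingle_mem_of_apply_ne_one (hcenter j) hk hkj (x j)

/-- Let `H = H₁ × ⋯ × Hₛ` be a finite Cartesian product of nonabelian
finite simple groups and `a` an automorphism of `H`. If no simple factor lies in the
fixed-point subgroup of `a` (i.e. for each `i` some element of the `i`-th factor is moved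
by `a`), then `H = [H, a]`, the subgroup generated by all `h⁻¹ · a(h)`. -/
theorem stmt_1 {ι : Type*} [Fintype ι] [DecidableEq ι] (H : ι → Type*)
    [∀ i, Group (H i)] [∀ i, Finite (H i)] [∀ i, IsSimpleGroup (H i)]
    (hna : ∀ i, ∃ x y : H i, x * y ≠ y * x)
    (a : MulAut (∀ i, H i))
    (hfix : ∀ i, ∃ x : H i, a (Pi.mulSingle i x) ≠ Pi.mulSingle i x) :
    Subgroup.closure {c : ∀ i, H i | ∃ h : ∀ i, H i, c = h⁻¹ * a h} = ⊤ :=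
  stmt_1_general H hna a hfix
end

section
/- Let S be a nonabelian finite simple group and Q a finite group, and let W = (Q → S) ⋊ Q be the regular wreath product S ≀ Q, with base subgroup B = {(f, 1) : f ∈ Q → S}. If x = (f, q) ∈ W with q ≠ 1 (equivalently, x ∉ B), then [B, x] = B, where [B,x] is the subgroup generated by {b⁻¹x⁻¹bx : b ∈ B}. -/
/-!
Write `x = (f, q)`. Since `B` is normal, every `[b, x]` lies in `B`, and the identity
`c [b, x] c⁻¹ = [b c⁻¹, x] [c⁻¹, x]⁻¹` shows that `K = [B, x]` is normal in `B = Q → S`.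
For `b` concentrated at a coordinate `i`, `x⁻¹ b x` is concentrated at `q⁻¹ i ≠ i`, so the
`i`-th coordinates of elements of `K` exhaust `S`. Taking commutators of such elements with
elements concentrated at `i` puts `[S, S] = S` (as `S` is nonabelian simple) into every coordinate of
`K`, hence `K = B`.
-/

/-- The action of `Q` on the base group `Q → S` of the regular wreath product `S ≀ Q`,
permuting coordinates by left translation: `(q • f) x = f (q⁻¹ * x)`. -/
def wreathAction (S Q : Type*) [Group S] [Group Q] : Q →* MulAut (Q → S) where
  toFun q :=
    { toFun := fun f x => f (q⁻¹ * x)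
      invFun := fun f x => f (q * x)
      left_inv := fun f => by funext x; simp [← mul_assoc]
      right_inv := fun f => by funext x; simp [← mul_assoc]
      map_mul' := fun f g => rfl }
  map_one' := by ext f x; simp
  map_mul' := fun q r => by ext f x; simp [mul_assoc, mul_inv_rev]

open SemidirectProduct
open scoped commutatorElement

theorem commutator_eq_top_of_isSimpleGroup {S : Type*} [Group S] [IsSimpleGroup S]
    (h : ∃ a b : S, a * b ≠ b * a) : commutator S = ⊤ := by
  refine (Subgroup.commutator_normal ⊤ ⊤).eq_bot_or_eq_top.resolve_left fun hbot => ?_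
  obtain ⟨a, b, hab⟩ := h
  exact hab (((commutator_eq_bot_iff S).mp hbot).is_comm.comm a b)

theorem Pi.commutatorElement_mulSingle {ι : Type*} [DecidableEq ι] {G : ι → Type*}
    [∀ i, Group (G i)] (g : ∀ i, G i) (i : ι) (u : G i) :
    ⁅g, Pi.mulSingle i u⁆ = Pi.mulSingle i ⁅g i, u⁆ := by
  ext j
  rcases eq_or_ne j i with rfl | hj
  · simp [commutatorElement_def]
  · simp [commutatorElement_def, hj]

theorem Subgroup.eq_top_of_normal_of_forall_exists_apply_eq {ι : Type*} [Finite ι]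
    {G : ι → Type*} [∀ i, Group (G i)] (hG : ∀ i, _root_.commutator (G i) = ⊤)
    (K : Subgroup (∀ i, G i)) [K.Normal] (hK : ∀ i (s : G i), ∃ g ∈ K, g i = s) : K = ⊤ := by
  classical
  have hsingle : ∀ i, _root_.commutator (G i) ≤ K.comap (MonoidHom.mulSingle G i) := by
    intro i
    rw [commutator_eq_closure, Subgroup.closure_le]
    rintro _ ⟨a, b, rfl⟩
    obtain ⟨g, hgK, rfl⟩ := hK i a
    rw [SetLike.mem_coe, Subgroup.mem_comap, MonoidHom.mulSingle_apply,
      ← Pi.commutatorElement_mulSingle]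
    exact Subgroup.commutator_le_left K ⊤ (Subgroup.commutator_mem_commutator hgK trivial)
  refine eq_top_iff.mpr fun g _ => Subgroup.pi_mem_of_mulSingle_mem g fun i => ?_
  exact hsingle i (by rw [hG i]; trivial)

theorem normal_comap_closure_inv_mul_inv_mul_mul {G H : Type*} [Group G] [Group H]
    (φ : H →* G) (x : G) :
    ((Subgroup.closure {d | ∃ b, d = (φ b)⁻¹ * x⁻¹ * φ b * x}).comap φ).Normal := by
  set N := Subgroup.closure {d | ∃ b, d = (φ b)⁻¹ * x⁻¹ * φ b * x}
  refine ⟨fun n hn c => ?_⟩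
  suffices N ≤ N.comap (MulAut.conj (φ c)).toMonoidHom by simpa using this hn
  rw [Subgroup.closure_le]
  rintro _ ⟨b, rfl⟩
  have key : φ c * ((φ b)⁻¹ * x⁻¹ * φ b * x) * (φ c)⁻¹ =
      ((φ (b * c⁻¹))⁻¹ * x⁻¹ * φ (b * c⁻¹) * x) * ((φ c⁻¹)⁻¹ * x⁻¹ * φ c⁻¹ * x)⁻¹ := by
    simp only [map_mul, map_inv]; group
  simp only [SetLike.mem_coe, Subgroup.mem_comap, MulEquiv.coe_toMonoidHom, MulAut.conj_apply, key]
  exact N.mul_mem (Subgroup.subset_closure ⟨_, rfl⟩) (N.inv_mem (Subgroup.subset_closure ⟨_, rfl⟩))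

theorem wreath_inl_commutator_eq {S Q : Type*} [Group S] [Group Q] (f b : Q → S) (q : Q) :
    (inl b)⁻¹ * (⟨f, q⟩ : (Q → S) ⋊[wreathAction S Q] Q)⁻¹ * inl b * ⟨f, q⟩ =
      inl (b⁻¹ * fun y => (f (q * y))⁻¹ * b (q * y) * f (q * y)) := by
  ext y
  · simp only [mul_left, inv_left, inv_right, left_inl, mul_right, right_inl]
    simp [wreathAction, mul_assoc]
  · simp

theorem exists_wreath_inl_commutator_eq_inl_apply_eq {S Q : Type*} [Group S] [Group Q]
    [DecidableEq Q] (f : Q → S) {q i : Q} (s : S) (hqi : q * i ≠ i) :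
    ∃ b g : Q → S, (inl b)⁻¹ * (⟨f, q⟩ : (Q → S) ⋊[wreathAction S Q] Q)⁻¹ * inl b * ⟨f, q⟩ =
      inl g ∧ g i = s :=
  ⟨Pi.mulSingle i s⁻¹, _, wreath_inl_commutator_eq f _ q, by simp [hqi]⟩

theorem stmt_3_general (S Q : Type*) [Group S] [IsSimpleGroup S]
    (hna : ∃ x y : S, x * y ≠ y * x) [Group Q] [Finite Q]
    (f : Q → S) (q : Q) (hq : q ≠ 1) :
    Subgroup.closure {c : (Q → S) ⋊[wreathAction S Q] Q |
        ∃ b : Q → S, c = (SemidirectProduct.inl b)⁻¹ *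
          (⟨f, q⟩ : (Q → S) ⋊[wreathAction S Q] Q)⁻¹ *
          SemidirectProduct.inl b * (⟨f, q⟩ : (Q → S) ⋊[wreathAction S Q] Q)} =
      SemidirectProduct.inl.range := by
  classical
  refine le_antisymm ((Subgroup.closure_le _).mpr ?_) ?_
  · rintro _ ⟨b, rfl⟩
    exact ⟨_, (wreath_inl_commutator_eq f b q).symm⟩
  have hqi : ∀ i, q * i ≠ i := fun i h => hq (mul_eq_right.mp h)
  have := normal_comap_closure_inv_mul_inv_mul_mul inl (⟨f, q⟩ : (Q → S) ⋊[wreathAction S Q] Q)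
  rw [MonoidHom.range_eq_map, Subgroup.map_le_iff_le_comap, top_le_iff]
  refine Subgroup.eq_top_of_normal_of_forall_exists_apply_eq
    (fun _ => commutator_eq_top_of_isSimpleGroup hna) _ fun i s => ?_
  obtain ⟨b, g, hbg, rfl⟩ := exists_wreath_inl_commutator_eq_inl_apply_eq f s (hqi i)
  exact ⟨g, Subgroup.mem_comap.mpr (hbg ▸ Subgroup.subset_closure ⟨b, rfl⟩), rfl⟩

/-- Let `S` be a nonabelian finite simple group, `Q` a finite group, and
`W = (Q → S) ⋊ Q` the regular wreath product `S ≀ Q` with base subgroup `B`.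
If `x = (f, q) ∈ W` with `q ≠ 1`, then `[B, x] = B`, where `[B, x]` is the subgroup
generated by all commutators `b⁻¹x⁻¹bx` with `b ∈ B`. -/
theorem stmt_3 (S Q : Type*) [Group S] [Finite S] [IsSimpleGroup S]
    (hna : ∃ x y : S, x * y ≠ y * x) [Group Q] [Finite Q]
    (f : Q → S) (q : Q) (hq : q ≠ 1) :
    Subgroup.closure {c : (Q → S) ⋊[wreathAction S Q] Q |
        ∃ b : Q → S, c = (SemidirectProduct.inl b)⁻¹ *
          (⟨f, q⟩ : (Q → S) ⋊[wreathAction S Q] Q)⁻¹ *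
          SemidirectProduct.inl b * (⟨f, q⟩ : (Q → S) ⋊[wreathAction S Q] Q)} =
      SemidirectProduct.inl.range :=
  stmt_3_general S Q hna f q hq
end

section
/- Let p be a prime and G a locally finite p-group (every finitely generated subgroup of G is a finite p-group) such that the abelianization G/G' is finite. If G is residually finite, then G is finite. -/
/-!
Choose a finitely generated `H` with `H G' = G`. For `g ∈ G` the subgroup `K = ⟨H, g⟩` is
finite, so residual finiteness gives a normal subgroup `N` of finite index with `K ∩ N = 1`.
In the finite `p`-group `G/N`, which is nilpotent, the commutator subgroup lies in the
Frattini subgroup, so `HG' = G` forces `HN = G`. By the Dedekind law `K = H(K ∩ N) = H`,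
hence `g ∈ H`. Thus `G = H` is finite.
-/

namespace Subgroup

variable {G : Type*} [Group G]

theorem commutator_le_of_isCoatom [Group.IsNilpotent G] {M : Subgroup G} (hM : IsCoatom M) :
    _root_.commutator G ≤ M := by
  have : M.Normal :=
    NormalizerCondition.normal_of_coatom M Group.normalizerCondition_of_isNilpotent hM
  let e : Subgroup (G ⧸ M) ≃o Set.Ici M := QuotientGroup.comapMk'OrderIso M
  have : IsSimpleOrder (Subgroup (G ⧸ M)) :=
    e.isSimpleOrder_iff.2 (Set.isSimpleOrder_Ici_iff_isCoatom.2 hM)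
  -- `G ⧸ M` is simple and nilpotent, hence abelian.
  have : IsSimpleGroup (G ⧸ M) :=
    { toNontrivial := nontrivial_iff.1 inferInstance
      eq_bot_or_eq_top_of_normal := fun H _ => IsSimpleOrder.eq_bot_or_eq_top H }
  simpa using Abelianization.commutator_subset_ker (QuotientGroup.mk' M)

theorem commutator_le_frattini [Group.IsNilpotent G] : _root_.commutator G ≤ frattini G :=
  le_iInf₂ fun _ => commutator_le_of_isCoatom

theorem eq_top_of_sup_commutator_eq_top [Group.IsNilpotent G] [IsCoatomic (Subgroup G)]
    {H : Subgroup G} (h : H ⊔ _root_.commutator G = ⊤) : H = ⊤ :=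
  frattini_nongenerating (top_unique (h ▸ sup_le_sup_left commutator_le_frattini H))

theorem sup_eq_top_of_sup_commutator_eq_top {H N : Subgroup G} [N.Normal]
    [Group.IsNilpotent (G ⧸ N)] [IsCoatomic (Subgroup (G ⧸ N))]
    (h : H ⊔ _root_.commutator G = ⊤) : H ⊔ N = ⊤ := by
  have hsurj := QuotientGroup.mk'_surjective N
  have hmap : H.map (QuotientGroup.mk' N) = ⊤ := by
    refine eq_top_of_sup_commutator_eq_top ?_
    rw [← map_top_of_surjective _ hsurj, ← h, map_sup, _root_.commutator, _root_.commutator,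
      map_commutator, map_top_of_surjective _ hsurj]
  rw [sup_comm, ← QuotientGroup.comap_map_mk', hmap, comap_top]

theorem le_of_sup_eq_top_of_inf_eq_bot {H K N : Subgroup G} [N.Normal] (hHK : H ≤ K)
    (hHN : H ⊔ N = ⊤) (hKN : K ⊓ N = ⊥) : K ≤ H := by
  intro g hg
  obtain ⟨h, hh, n, hn, rfl⟩ := mem_sup_of_normal_right.1 (hHN ▸ mem_top g)
  have hnK : n ∈ K := by simpa using mul_mem (inv_mem (hHK hh)) hg
  have hn1 : n = 1 := (eq_bot_iff_forall _).1 hKN n ⟨hnK, hn⟩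
  simpa [hn1] using hh

theorem exists_fg_sup_eq_top (N : Subgroup G) [Finite (G ⧸ N)] :
    ∃ H : Subgroup G, H.FG ∧ H ⊔ N = ⊤ := by
  refine ⟨closure (Set.range (Quotient.out : G ⧸ N → G)), ?_, eq_top_iff.2 fun g _ => ?_⟩
  · exact (fg_iff _).2 ⟨_, rfl, Set.finite_range _⟩
  · obtain ⟨n, hn⟩ := QuotientGroup.mk_out_eq_mul N g
    have hg : g = (g : G ⧸ N).out * (n : G)⁻¹ := by simp [hn]
    rw [hg]
    exact mul_mem_sup (subset_closure (Set.mem_range_self _)) (inv_mem n.2)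

theorem zpowers_fg (g : G) : (zpowers g).FG := by
  rw [zpowers_eq_closure]; exact (fg_iff _).2 ⟨_, rfl, Set.finite_singleton g⟩

end Subgroup

theorem IsPGroup.of_forall_fg {G : Type*} [Group G] {p : ℕ}
    (h : ∀ H : Subgroup G, H.FG → IsPGroup p H) : IsPGroup p G := fun g => by
  obtain ⟨k, hk⟩ := h _ (Subgroup.zpowers_fg g) ⟨g, Subgroup.mem_zpowers g⟩
  exact ⟨k, by simpa using congrArg Subtype.val hk⟩

theorem Group.ResiduallyFinite.exists_normal_finiteIndex_inf_eq_bot {G : Type*} [Group G]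
    [Group.ResiduallyFinite G] (K : Subgroup G) [Finite K] :
    ∃ N : Subgroup G, N.Normal ∧ N.FiniteIndex ∧ K ⊓ N = ⊥ := by
  choose H hH using fun k : {k : K // k ≠ 1} =>
    exists_finiteIndexNormalSubgroup_notMem (k : G) (by simpa using k.2)
  refine ⟨⨅ k, (H k).toSubgroup, Subgroup.normal_iInf_normal fun k => inferInstance,
    Subgroup.finiteIndex_iInf fun k => inferInstance, ?_⟩
  refine (Subgroup.eq_bot_iff_forall _).2 fun g ⟨hgK, hgN⟩ => ?_
  by_contra hg
  exact hH ⟨⟨g, hgK⟩, by simpa using hg⟩ (Subgroup.mem_iInf.1 hgN _)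

theorem IsPGroup.eq_top_of_fg_of_sup_commutator_eq_top {G : Type*} [Group G]
    [Group.ResiduallyFinite G] {p : ℕ} [Fact p.Prime] (hG : IsPGroup p G)
    (hloc : ∀ K : Subgroup G, K.FG → Finite K) {H : Subgroup G} (hH : H.FG)
    (h : H ⊔ commutator G = ⊤) : H = ⊤ := by
  refine eq_top_iff.2 fun g _ => ?_
  have : Finite ↥(H ⊔ Subgroup.zpowers g) := hloc _ (hH.sup (Subgroup.zpowers_fg g))
  obtain ⟨N, _, _, hKN⟩ := Group.ResiduallyFinite.exists_normal_finiteIndex_inf_eq_bot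
    (H ⊔ Subgroup.zpowers g)
  have : IsPGroup p (G ⧸ N) := hG.to_quotient N
  have : Group.IsNilpotent (G ⧸ N) := this.isNilpotent
  have hHN : H ⊔ N = ⊤ := Subgroup.sup_eq_top_of_sup_commutator_eq_top h
  exact Subgroup.le_of_sup_eq_top_of_inf_eq_bot le_sup_left hHN hKN
    (Subgroup.mem_sup_right (Subgroup.mem_zpowers g))

/-- Let `p` be a prime and `G` a locally finite `p`-group (every finitely
generated subgroup is a finite `p`-group) whose abelianization `G/G'` is finite.
If `G` is residually finite, then `G` is finite. -/
theorem stmt_4 {G : Type*} [Group G] (p : ℕ) (hp : p.Prime)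
    (hloc : ∀ H : Subgroup G, H.FG → Finite H ∧ IsPGroup p H)
    (hab : Finite (G ⧸ commutator G))
    (hrf : ∀ g : G, g ≠ 1 → ∃ N : Subgroup G, N.Normal ∧ N.FiniteIndex ∧ g ∉ N) :
    Finite G := by
  have : Fact p.Prime := ⟨hp⟩
  have : Group.ResiduallyFinite G := Group.residuallyFinite_iff_exists_finiteIndex.2 fun g hg =>
    let ⟨N, _, hN, hgN⟩ := hrf g hg; ⟨N, hN, hgN⟩
  have hG : IsPGroup p G := .of_forall_fg fun H hH => (hloc H hH).2
  obtain ⟨H, hH, hHG'⟩ := Subgroup.exists_fg_sup_eq_top (commutator G)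
  have hHtop := hG.eq_top_of_fg_of_sup_commutator_eq_top (fun K hK => (hloc K hK).1) hH hHG'
  have : Finite (⊤ : Subgroup G) := hHtop ▸ (hloc H hH).1
  exact .of_equiv _ Subgroup.topEquiv.toEquiv
end

section
/- Let n be a positive integer and let G be an infinite group that is residually of order at most n, i.e., for every nontrivial g ∈ G there exists a normal subgroup N of G of index at most n with g ∉ N (equivalently, the intersection of all normal subgroups of index at most n is trivial). Then G has a proper infinite quotient: there exists a nontrivial normal subgroup N of G such that G/N is infinite. -/
/-- Let `n` be a positive integer and `G` an infinite group that is
residually of order at most `n`: every nontrivial `g ∈ G` avoids some normal subgroup of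
finite index at most `n`. Then `G` has a proper infinite quotient: there is a nontrivial
normal subgroup `N` with `G/N` infinite. -/
theorem stmt_5 {G : Type*} [Group G] (n : ℕ) (hn : 0 < n) [Infinite G]
    (hres : ∀ g : G, g ≠ 1 →
      ∃ N : Subgroup G, N.Normal ∧ N.index ≠ 0 ∧ N.index ≤ n ∧ g ∉ N) :
    ∃ N : Subgroup G, N.Normal ∧ N ≠ ⊥ ∧ Infinite (G ⧸ N) := by
  classical
  set S : Set (Subgroup G) := {N | N.Normal ∧ N.index ≠ 0 ∧ N.index ≤ n} with hSdef
  -- Step 1: S is infinite.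
  have hSinf : S.Infinite := by
    by_contra hfin
    rw [Set.not_infinite] at hfin
    haveI : Finite ↥S := hfin.to_subtype
    have hFI : (⨅ N : ↥S, (N : Subgroup G)).FiniteIndex :=
      Subgroup.finiteIndex_iInf fun N => ⟨N.2.2.1⟩
    have hbot : (⨅ N : ↥S, (N : Subgroup G)) = ⊥ := by
      rw [eq_bot_iff]
      intro x hx
      rw [Subgroup.mem_iInf] at hx
      rw [Subgroup.mem_bot]
      by_contra hx1
      obtain ⟨N, hN1, hN2, hN3, hN4⟩ := hres x hx1
      exact hN4 (hx ⟨N, hN1, hN2, hN3⟩)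
    rw [hbot] at hFI
    have := hFI.index_ne_zero
    rw [Subgroup.index_bot] at this
    exact this (Nat.card_eq_zero_of_infinite)
  -- Step 2: pigeonhole, find a nontrivial g in infinitely many members of S.
  let e : ℕ ↪ G := Infinite.natEmbedding G
  let f : Fin (n + 1) → G := fun i => e i
  have hfinj : Function.Injective f := by
    intro i j h
    exact Fin.ext (e.injective h)
  have key : ∀ N : ↥S, ∃ p : Fin (n + 1) × Fin (n + 1),
      p.1 ≠ p.2 ∧ (f p.1)⁻¹ * f p.2 ∈ (N : Subgroup G) := by
    rintro ⟨N, hN1, hN2, hN3⟩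
    haveI : Finite (G ⧸ N) := Nat.finite_of_card_ne_zero hN2
    haveI : Fintype (G ⧸ N) := Fintype.ofFinite _
    have hlt : Fintype.card (G ⧸ N) < Fintype.card (Fin (n + 1)) := by
      have h1 : Fintype.card (G ⧸ N) = N.index := by
        rw [Subgroup.index, Nat.card_eq_fintype_card]
      rw [h1, Fintype.card_fin]
      omega
    obtain ⟨i, j, hij, hmk⟩ :=
      Fintype.exists_ne_map_eq_of_card_lt (fun i : Fin (n + 1) => ((f i : G) : G ⧸ N)) hlt
    exact ⟨(i, j), hij, (QuotientGroup.eq).mp hmk⟩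
  let φ : ↥S → Fin (n + 1) × Fin (n + 1) := fun N => (key N).choose
  haveI : Infinite ↥S := hSinf.to_subtype
  obtain ⟨p₀, hp₀⟩ := Finite.exists_infinite_fiber φ
  haveI : Infinite ↥(φ ⁻¹' {p₀}) := hp₀
  set g : G := (f p₀.1)⁻¹ * f p₀.2 with hgdef
  -- some element of the fiber shows p₀.1 ≠ p₀.2
  obtain ⟨x₀⟩ := (inferInstance : Infinite ↥(φ ⁻¹' {p₀})).nonempty
  have hx₀ : φ x₀.1 = p₀ := x₀.2
  have hgne : g ≠ 1 := by
    have hne : p₀.1 ≠ p₀.2 := by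
      have := (key x₀.1).choose_spec.1
      rwa [show (key x₀.1).choose = φ x₀.1 from rfl, hx₀] at this
    intro h
    apply hne
    apply hfinj
    rw [← inv_mul_eq_one]
    exact h
  -- the set of members of S containing g is infinite
  set A : Set (Subgroup G) := {N | N ∈ S ∧ g ∈ N} with hAdef
  have hAinf : A.Infinite := by
    apply Set.infinite_of_injective_forall_mem
      (f := fun x : ↥(φ ⁻¹' {p₀}) => ((x : ↥S) : Subgroup G))
    · intro a b h
      exact Subtype.ext (Subtype.ext h)
    · intro a
      refine ⟨a.1.2, ?_⟩
      have hspec := (key a.1).choose_spec.2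
      rwa [show (key a.1).choose = φ a.1 from rfl, a.2] at hspec
  -- Step 3: K = sInf A works
  have hnormal : (sInf A).Normal := by
    constructor
    intro x hx c
    rw [Subgroup.mem_sInf] at hx ⊢
    intro N hN
    exact hN.1.1.conj_mem x (hx N hN) c
  haveI := hnormal
  refine ⟨sInf A, hnormal, ?_, ?_⟩
  · intro hKbot
    have hgK : g ∈ sInf A := by
      rw [Subgroup.mem_sInf]
      intro N hN
      exact hN.2
    rw [hKbot, Subgroup.mem_bot] at hgK
    exact hgne hgK
  · by_contra hfin
    rw [not_infinite_iff_finite] at hfin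
    haveI := hfin
    haveI : Finite (Subgroup (G ⧸ sInf A)) :=
      Finite.of_injective (fun H : Subgroup (G ⧸ sInf A) => (H : Set (G ⧸ sInf A)))
        SetLike.coe_injective
    haveI : Infinite ↥A := hAinf.to_subtype
    have hinj : Function.Injective
        (fun N : ↥A => Subgroup.map (QuotientGroup.mk' (sInf A)) (N : Subgroup G)) := by
      intro N M h
      have hN : sInf A ≤ (N : Subgroup G) := sInf_le N.2
      have hM : sInf A ≤ (M : Subgroup G) := sInf_le M.2
      apply Subtype.ext
      have h2 := congrArg (Subgroup.comap (QuotientGroup.mk' (sInf A))) h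
      simpa [Subgroup.comap_map_eq, QuotientGroup.ker_mk', sup_eq_left.mpr hN,
        sup_eq_left.mpr hM] using h2
    have := Infinite.of_injective _ hinj
    exact not_finite (Subgroup (G ⧸ sInf A))
end
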